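/- Under the same setup (X bounded a.s., ε independent of X with E[ε²] < ∞, C independent of (ε, X), T = exp(X^⊤β⁰ + ε), δ = 1_{T≤C}, Y = min(T,C), G_0(t) = P(C > t) continuous with G_0(T) ≥ ζ_0 > 0 a.s.), the second moment of the weighted score satisfies, entrywise, E[ (δ / G_0(Y)²) · g_τ(ε)² · X X^⊤ ] = E[ g_τ(ε)² · X X^⊤ / G_0(T) ]. -/

import Mathlib

/-!
Since `T` is a function of `W = (ε, X)` and `C` is independent of `W`, integrating out `C` first
replaces `δ = 1_{T ≤ C}` by `P(C ≥ T | W) = G₀(T)`; continuity of `G₀` is what makes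
`P(C ≥ s) = P(C > s)`. On `{δ = 1}` we have `Y = T`, so the integrand becomes
`G₀(T) · g_τ(ε)² X X^⊤ / G₀(T)² = g_τ(ε)² X X^⊤ / G₀(T)`. Fubini applies because
`g_τ(x)² ≤ 4(τ² + (1 - τ)²) x²`, `X` is bounded and `G₀(T) ≥ ζ₀`.
-/

open MeasureTheory ProbabilityTheory Filter Topology

noncomputable section

/-- `g_τ(x) = -2τx 1_{x≥0} - 2(1-τ)x 1_{x<0}`. -/
def gExp (τ x : ℝ) : ℝ := if 0 ≤ x then -2 * τ * x else -2 * (1 - τ) * x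

@[fun_prop]
lemma measurable_gExp (τ : ℝ) : Measurable (gExp τ) :=
  Measurable.ite (measurableSet_le measurable_const measurable_id) (by fun_prop) (by fun_prop)

lemma gExp_sq_le (τ x : ℝ) : gExp τ x ^ 2 ≤ 4 * (τ ^ 2 + (1 - τ) ^ 2) * x ^ 2 := by
  unfold gExp
  split_ifs <;> nlinarith [mul_nonneg (sq_nonneg τ) (sq_nonneg x),
    mul_nonneg (sq_nonneg (1 - τ)) (sq_nonneg x)]

section

variable {Ω : Type*} [MeasurableSpace Ω] {μ : Measure Ω}

lemma MeasureTheory.Integrable.gExp_sq {ε : Ω → ℝ} (hε2 : Integrable (fun ω => ε ω ^ 2) μ)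
    (hε : Measurable ε) (τ : ℝ) :
    Integrable (fun ω => gExp τ (ε ω) ^ 2) μ :=
  (hε2.const_mul (4 * (τ ^ 2 + (1 - τ) ^ 2))).mono'
    (((measurable_gExp τ).comp hε).pow_const 2).aestronglyMeasurable
    (ae_of_all _ fun ω => by
      rw [Real.norm_of_nonneg (sq_nonneg _)]
      exact gExp_sq_le τ (ε ω))

lemma integrable_mul_div_sq_mul_gExp_sq {ε a b G : Ω → ℝ} (hε : Measurable ε)
    (hε2 : Integrable (fun ω => ε ω ^ 2) μ) (ha : Measurable a) (hb : Measurable b)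
    (hG : Measurable G) {c ζ : ℝ} (hζ : 0 < ζ) (hac : ∀ᵐ ω ∂μ, |a ω| ≤ c)
    (hbc : ∀ᵐ ω ∂μ, |b ω| ≤ c) (hGζ : ∀ᵐ ω ∂μ, ζ ≤ G ω) (τ : ℝ) :
    Integrable (fun ω => a ω * b ω / G ω ^ 2 * gExp τ (ε ω) ^ 2) μ := by
  refine (hε2.gExp_sq hε τ).bdd_mul (c := c * c / ζ ^ 2)
    (Measurable.aestronglyMeasurable (by fun_prop)) ?_
  filter_upwards [hac, hbc, hGζ] with ω haω hbω hGω
  have hc : 0 ≤ c := (abs_nonneg _).trans haω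
  rw [Real.norm_eq_abs, abs_div, abs_mul, abs_sq]
  gcongr

lemma measureReal_le_eq_measureReal_lt [IsFiniteMeasure μ] {C : Ω → ℝ} (hC : Measurable C)
    {s : ℝ} (hcont : ContinuousWithinAt (fun r => μ.real {ω | r < C ω}) (Set.Iio s) s) :
    μ.real {ω | s ≤ C ω} = μ.real {ω | s < C ω} := by
  have hInter : (⋂ r > (0 : ℝ), {ω | s - r < C ω}) = {ω | s ≤ C ω} := by
    ext ω
    simp only [Set.mem_iInter, Set.mem_ofPred_eq, sub_lt_iff_lt_add]
    exact ⟨le_of_forall_pos_lt_add, fun h r hr => by linarith⟩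
  have hmeas : Tendsto (fun r => μ {ω | s - r < C ω}) (𝓝[>] 0) (𝓝 (μ {ω | s ≤ C ω})) := by
    rw [← hInter]
    exact tendsto_measure_biInter_gt
      (fun _ _ => (measurableSet_lt measurable_const hC).nullMeasurableSet)
      (fun r r' _ hrr' ω (hω : s - r < C ω) => show s - r' < C ω by linarith)
      ⟨1, one_pos, measure_ne_top μ _⟩
  have hleft : Tendsto (fun r : ℝ => s - r) (𝓝[>] 0) (𝓝[<] s) := by
    refine tendsto_nhdsWithin_of_tendsto_nhds_of_eventually_within _ ?_ ?_
    · exact ((continuous_sub_left s).tendsto' 0 s (sub_zero s)).mono_left nhdsWithin_le_nhds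
    · filter_upwards [self_mem_nhdsWithin] with r (hr : 0 < r)
      exact sub_lt_self s hr
  exact tendsto_nhds_unique
    ((ENNReal.tendsto_toReal (measure_ne_top μ _)).comp hmeas) (hcont.tendsto.comp hleft)

lemma ProbabilityTheory.IndepFun.integral_ite_le [IsFiniteMeasure μ] {α : Type*}
    [MeasurableSpace α] {W : Ω → α} {C : Ω → ℝ} (hind : IndepFun W C μ) (hW : Measurable W)
    (hC : Measurable C) {t h : α → ℝ} (ht : Measurable t) (hh : Measurable h)
    (hint : Integrable (fun ω => h (W ω)) μ) :
    ∫ ω, (if t (W ω) ≤ C ω then h (W ω) else 0) ∂μ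
      = ∫ ω, μ.real {ω' | t (W ω) ≤ C ω'} * h (W ω) ∂μ := by
  set F : α × ℝ → ℝ := fun q => if t q.1 ≤ q.2 then h q.1 else 0
  have hF : Measurable F :=
    Measurable.ite (measurableSet_le (ht.comp measurable_fst) measurable_snd)
      (hh.comp measurable_fst) measurable_const
  have hFint : Integrable F ((μ.map W).prod (μ.map C)) := by
    refine ((integrable_map_measure hh.aestronglyMeasurable hW.aemeasurable).mpr hint).comp_fst
      _ |>.norm.mono' hF.aestronglyMeasurable (ae_of_all _ fun q => ?_)
    simp only [F]
    split_ifs <;> simp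
  have hinner : ∀ w, ∫ y, F (w, y) ∂(μ.map C) = μ.real {ω | t w ≤ C ω} * h w := by
    intro w
    have hind : (fun y => F (w, y)) = (Set.Ici (t w)).indicator fun _ => h w := by
      ext y
      simp [F, Set.indicator_apply]
    rw [hind, integral_indicator_const _ measurableSet_Ici,
      map_measureReal_apply hC measurableSet_Ici, smul_eq_mul]
    rfl
  have hsurv : Measurable fun s => μ.real {ω | s ≤ C ω} :=
    Antitone.measurable fun _ _ hss' => measureReal_mono fun _ hω => hss'.trans hω
  calc ∫ ω, (if t (W ω) ≤ C ω then h (W ω) else 0) ∂μ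
      = ∫ q, F q ∂(μ.map fun ω => (W ω, C ω)) :=
        (integral_map (hW.prodMk hC).aemeasurable hF.aestronglyMeasurable).symm
    _ = ∫ w, ∫ y, F (w, y) ∂(μ.map C) ∂(μ.map W) := by
        rw [(indepFun_iff_map_prod_eq_prod_map_map hW.aemeasurable hC.aemeasurable).mp hind,
          integral_prod F hFint]
    _ = ∫ ω, μ.real {ω' | t (W ω) ≤ C ω'} * h (W ω) ∂μ := by
        simp_rw [hinner]
        exact integral_map hW.aemeasurable ((hsurv.comp ht).mul hh).aestronglyMeasurable

end

theorem censored_expectile_score_second_moment_general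
    {Ω : Type*} [MeasurableSpace Ω] (μ : Measure Ω) [IsProbabilityMeasure μ]
    {p : ℕ} (τ : ℝ)
    (X : Ω → Fin p → ℝ) (ε : Ω → ℝ) (C : Ω → ℝ)
    (hXm : Measurable X) (hεm : Measurable ε) (hCm : Measurable C)
    (hXbd : ∃ c : ℝ, ∀ᵐ ω ∂μ, ∀ j, |X ω j| ≤ c)
    (hε2 : Integrable (fun ω => ε ω ^ 2) μ)
    (hIndC : IndepFun C (fun ω => (ε ω, X ω)) μ)
    (β0 : Fin p → ℝ)
    (T : Ω → ℝ) (hT : ∀ ω, T ω = Real.exp ((∑ j, X ω j * β0 j) + ε ω))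
    (δ : Ω → ℝ) (hδ : ∀ ω, δ ω = if T ω ≤ C ω then 1 else 0)
    (Y : Ω → ℝ) (hY : ∀ ω, Y ω = min (T ω) (C ω))
    (G0 : ℝ → ℝ) (hG0 : ∀ t, G0 t = (μ {ω | t < C ω}).toReal)
    (hG0cont : Continuous G0)
    (ζ0 : ℝ) (hζ0 : 0 < ζ0) (hG0T : ∀ᵐ ω ∂μ, ζ0 ≤ G0 (T ω)) :
    ∀ j k,
      (∫ ω, (δ ω / (G0 (Y ω)) ^ 2) * gExp τ (ε ω) ^ 2 * X ω j * X ω k ∂μ)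
        = ∫ ω, gExp τ (ε ω) ^ 2 * X ω j * X ω k / G0 (T ω) ∂μ := by
  intro j k
  obtain ⟨c, hc⟩ := hXbd
  set t : ℝ × (Fin p → ℝ) → ℝ := fun w => Real.exp ((∑ i, w.2 i * β0 i) + w.1)
  set h : ℝ × (Fin p → ℝ) → ℝ := fun w => w.2 j * w.2 k / G0 (t w) ^ 2 * gExp τ w.1 ^ 2
  have ht : Measurable t := by fun_prop
  have hh : Measurable h := by simp only [h]; fun_prop
  have htT : ∀ ω, t (ε ω, X ω) = T ω := fun ω => (hT ω).symm
  have hTm : Measurable T := by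
    rw [← funext htT]
    exact ht.comp (hεm.prodMk hXm)
  have hsurv : ∀ s, μ.real {ω | s ≤ C ω} = G0 s := fun s =>
    (measureReal_le_eq_measureReal_lt hCm
      ((funext hG0 : G0 = _) ▸ hG0cont).continuousWithinAt).trans (hG0 s).symm
  have hint : Integrable (fun ω => h (ε ω, X ω)) μ := by
    simp only [h, htT]
    exact integrable_mul_div_sq_mul_gExp_sq hεm hε2 (by fun_prop) (by fun_prop)
      (hG0cont.measurable.comp hTm) hζ0 (hc.mono fun _ hω => hω j) (hc.mono fun _ hω => hω k)
      hG0T τ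
  calc (∫ ω, (δ ω / (G0 (Y ω)) ^ 2) * gExp τ (ε ω) ^ 2 * X ω j * X ω k ∂μ)
      = ∫ ω, (if t (ε ω, X ω) ≤ C ω then h (ε ω, X ω) else 0) ∂μ := by
        refine integral_congr_ae (ae_of_all _ fun ω => ?_)
        simp only [hδ, hY, h, htT]
        split_ifs with hTC
        · rw [min_eq_left hTC]; ring
        · ring
    _ = ∫ ω, G0 (T ω) * h (ε ω, X ω) ∂μ := by
        simp_rw [hIndC.symm.integral_ite_le (hεm.prodMk hXm) hCm ht hh hint, hsurv, htT]
    _ = ∫ ω, gExp τ (ε ω) ^ 2 * X ω j * X ω k / G0 (T ω) ∂μ := by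
        refine integral_congr_ae (hG0T.mono fun ω hζω => ?_)
        have : G0 (T ω) ≠ 0 := (hζ0.trans_le hζω).ne'
        simp only [h, htT]
        field_simp

/-- under the AFT setup (`X` a.s. bounded, `ε ⟂ X` with
`E[ε²] < ∞`, `C ⟂ (ε,X)`, `T = exp(X^⊤β⁰ + ε)`, `δ = 1_{T≤C}`, `Y = min(T,C)`,
`G₀(t) = P(C > t)` continuous with `G₀(T) ≥ ζ₀ > 0` a.s.), the second moment of
the weighted score satisfies, entrywise:
`E[(δ / G₀(Y)²) g_τ(ε)² X X^⊤] = E[g_τ(ε)² X X^⊤ / G₀(T)]`. -/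
theorem censored_expectile_score_second_moment
    {Ω : Type*} [MeasurableSpace Ω] (μ : Measure Ω) [IsProbabilityMeasure μ]
    {p : ℕ} (τ : ℝ) (hτ : τ ∈ Set.Ioo (0 : ℝ) 1)
    (X : Ω → Fin p → ℝ) (ε : Ω → ℝ) (C : Ω → ℝ)
    (hXm : Measurable X) (hεm : Measurable ε) (hCm : Measurable C)
    (hXbd : ∃ c : ℝ, ∀ᵐ ω ∂μ, ∀ j, |X ω j| ≤ c)
    (hIndεX : IndepFun ε X μ)
    (hε2 : Integrable (fun ω => ε ω ^ 2) μ)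
    (hIndC : IndepFun C (fun ω => (ε ω, X ω)) μ)
    (β0 : Fin p → ℝ)
    (T : Ω → ℝ) (hT : ∀ ω, T ω = Real.exp ((∑ j, X ω j * β0 j) + ε ω))
    (δ : Ω → ℝ) (hδ : ∀ ω, δ ω = if T ω ≤ C ω then 1 else 0)
    (Y : Ω → ℝ) (hY : ∀ ω, Y ω = min (T ω) (C ω))
    (G0 : ℝ → ℝ) (hG0 : ∀ t, G0 t = (μ {ω | t < C ω}).toReal)
    (hG0cont : Continuous G0)
    (ζ0 : ℝ) (hζ0 : 0 < ζ0) (hG0T : ∀ᵐ ω ∂μ, ζ0 ≤ G0 (T ω)) :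
    ∀ j k,
      (∫ ω, (δ ω / (G0 (Y ω)) ^ 2) * gExp τ (ε ω) ^ 2 * X ω j * X ω k ∂μ)
        = ∫ ω, gExp τ (ε ω) ^ 2 * X ω j * X ω k / G0 (T ω) ∂μ :=
  censored_expectile_score_second_moment_general μ τ X ε C hXm hεm hCm hXbd hε2 hIndC β0 T hT δ hδ Y
    hY G0 hG0 hG0cont ζ0 hζ0 hG0T
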